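/- arXiv:math/0509157 — 3 statements merged into one kernel-verified Lean document; each statement's English description precedes it below -/
import Mathlib

section
/- The product over all compositions (β_1,...,β_k) of n into k non-negative parts of β_1!·β_2!···β_k! equals the product over i from 1 to n of i raised to the power k·binom(n+k-i-1, k-1). -/
open Finset

/-- The polynomial binomial coefficient `y(y-1)⋯(y-m+1)/m!`. -/
noncomputable def bch {F : Type*} [Field F] (y : F) (m : ℕ) : F :=
  (∏ j ∈ Finset.range m, (y - (j : F))) / (m.factorial : F)

/-- Compositions of `n` into `k` non-negative parts. -/
abbrev Comp (n k : ℕ) := {f : Fin k → Fin (n + 1) // ∑ i, (f i : ℕ) = n}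

/-- Compositions of `n` into `k` strictly positive parts. -/
abbrev CompPos (n k : ℕ) :=
  {f : Fin k → Fin (n + 1) // (∑ i, (f i : ℕ)) = n ∧ ∀ i, 0 < (f i : ℕ)}

/-! Writing `b ! = ∏_{1 ≤ m ≤ b} m`, the exponent of `m` in the product over compositions is
the number of pairs `(β, i)` with `m ≤ β i`. For a fixed position `i`, lowering `β i` by `m`
matches these compositions with the compositions of `n - m` into `k` parts, of which there are
`(n + k - m - 1).choose (k - 1)`. -/

open scoped Nat

theorem Nat.factorial_eq_prod_Icc_pow_ite {b n : ℕ} (hb : b ≤ n) :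
    b ! = ∏ m ∈ Icc 1 n, m ^ (if m ≤ b then 1 else 0) := by
  simp only [pow_ite, pow_one, pow_zero]
  rw [← prod_filter, ← prod_Ico_id_eq_factorial, Ico_add_one_right_eq_Icc]
  congr 1
  ext m
  simp only [mem_filter, mem_Icc]
  omega

section SumEq

variable {ι : Type*}

theorem Pi.single_le_of_le_apply [DecidableEq ι] {f : ι → ℕ} {i : ι} {m : ℕ}
    (hm : m ≤ f i) :
    Pi.single i m ≤ f := fun j => by
  rcases eq_or_ne j i with rfl | hj <;> simp [*]

variable [Fintype ι]

theorem sum_tsub_pi_single [DecidableEq ι] {f : ι → ℕ} {i : ι} {m : ℕ} (hm : m ≤ f i) :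
    ∑ j, (f - Pi.single i m : ι → ℕ) j = ∑ j, f j - m := by
  conv_rhs => rw [← tsub_add_cancel_of_le (Pi.single_le_of_le_apply hm)]
  simp [sum_add_distrib]

def sumEqShiftEquiv [DecidableEq ι] {n m : ℕ} (hmn : m ≤ n) (i : ι) :
    {f : ι → ℕ // ∑ j, f j = n ∧ m ≤ f i} ≃
      {f : ι → ℕ // ∑ j, f j = n - m} where
  toFun f := ⟨f.1 - Pi.single i m, by rw [sum_tsub_pi_single f.2.2, f.2.1]⟩
  invFun g := ⟨g.1 + Pi.single i m, by simp [sum_add_distrib, g.2, hmn], by simp⟩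
  left_inv f := Subtype.ext (tsub_add_cancel_of_le (Pi.single_le_of_le_apply f.2.2))
  right_inv g := Subtype.ext (add_tsub_cancel_right _ _)

theorem Nat.card_subtype_sum_eq (N : ℕ) :
    Nat.card {f : ι → ℕ // ∑ j, f j = N} = (Fintype.card ι + N - 1).choose N := by
  classical
  rw [Nat.card_congr (Sym.equivNatSumOfFintype ι N).symm, Nat.card_eq_fintype_card,
    Sym.card_sym_eq_choose]

theorem Nat.card_subtype_sum_eq_and_le_apply {n m : ℕ} (hmn : m ≤ n) (i : ι) :
    Nat.card {f : ι → ℕ // ∑ j, f j = n ∧ m ≤ f i} =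
      (Fintype.card ι + (n - m) - 1).choose (n - m) := by
  classical
  rw [Nat.card_congr (sumEqShiftEquiv hmn i), Nat.card_subtype_sum_eq]

end SumEq

def Comp.equivNatSum (n k : ℕ) : Comp n k ≃ {f : Fin k → ℕ // ∑ j, f j = n} where
  toFun β := ⟨fun j => β.1 j, β.2⟩
  invFun f := ⟨fun j => ⟨f.1 j, Nat.lt_succ_of_le <|
    (single_le_sum (fun _ _ => Nat.zero_le _) (mem_univ j)).trans_eq f.2⟩, f.2⟩
  left_inv _ := rfl
  right_inv _ := rfl

theorem Comp.card_filter_le_apply {n k m : ℕ} (hk : 0 < k) (hm : m ≤ n) (i : Fin k) :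
    #{β : Comp n k | m ≤ (β.1 i : ℕ)} = (n + k - m - 1).choose (k - 1) := by
  have e : {β : Comp n k // m ≤ (β.1 i : ℕ)} ≃
      {f : Fin k → ℕ // ∑ j, f j = n ∧ m ≤ f i} :=
    ((Comp.equivNatSum n k).subtypeEquiv fun _ => Iff.rfl).trans
      (Equiv.subtypeSubtypeEquivSubtypeInter _ fun f => m ≤ f i)
  rw [← Fintype.card_subtype, ← Nat.card_eq_fintype_card, Nat.card_congr e,
    Nat.card_subtype_sum_eq_and_le_apply hm, Fintype.card_fin, ← Nat.choose_symm (by omega)]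
  congr 1 <;> omega

theorem Comp.sum_sum_ite_le_apply {n k m : ℕ} (hk : 0 < k) (hm : m ≤ n) :
    ∑ β : Comp n k, ∑ i, (if m ≤ (β.1 i : ℕ) then 1 else 0) =
      k * (n + k - m - 1).choose (k - 1) := by
  rw [sum_comm]
  simp only [sum_boole, Nat.cast_id, Comp.card_filter_le_apply hk hm, sum_const, card_univ,
    Fintype.card_fin, smul_eq_mul]

theorem stmt1 (n k : ℕ) :
    ∏ β : Comp n k, ∏ i, Nat.factorial (β.1 i) =
      ∏ i ∈ Finset.Icc 1 n, i ^ (k * (n + k - i - 1).choose (k - 1)) := by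
  rcases Nat.eq_zero_or_pos k with rfl | hk
  · simp
  calc ∏ β : Comp n k, ∏ i, (β.1 i : ℕ)!
      = ∏ β : Comp n k, ∏ i, ∏ m ∈ Icc 1 n, m ^ (if m ≤ (β.1 i : ℕ) then 1 else 0) :=
        prod_congr rfl fun _ _ => prod_congr rfl fun _ _ =>
          Nat.factorial_eq_prod_Icc_pow_ite (Fin.is_le _)
    _ = ∏ m ∈ Icc 1 n, ∏ β : Comp n k, ∏ i, m ^ (if m ≤ (β.1 i : ℕ) then 1 else 0) :=
        (prod_congr rfl fun _ _ => prod_comm).trans prod_comm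
    _ = ∏ m ∈ Icc 1 n, m ^ (∑ β : Comp n k, ∑ i, if m ≤ (β.1 i : ℕ) then 1 else 0) :=
        by simp only [prod_pow_eq_pow_sum]
    _ = ∏ m ∈ Icc 1 n, m ^ (k * (n + k - m - 1).choose (k - 1)) :=
        prod_congr rfl fun m hm => by rw [Comp.sum_sum_ite_le_apply hk (mem_Icc.1 hm).2]
end

section
/- For a vector x = (x_1,...,x_k) of indeterminates and positive integers n, k, the determinant of the matrix indexed by compositions α, β of n into k non-negative parts, with entry (x+α)^β := ∏_{i=1}^k (x_i+α_i)^{β_i}, equals (|x|+n)^{binom(n+k-1,k)} · ∏_{i=1}^{n} i^{(k-1)·binom(n+k-i-1,k-1)}, where |x| = x_1+···+x_k. -/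
open Finset

namespace Stmt5

variable {F : Type*} [Field F]

/-- Determinant of a matrix triangular with respect to a weight function. -/
lemma det_tri {I : Type*} [DecidableEq I] [Fintype I] (A : Matrix I I F) (w : I → ℕ)
    (h : ∀ i j, A i j ≠ 0 → i = j ∨ w j < w i) : A.det = ∏ i, A i i := by
  rw [Matrix.det_apply]
  rw [Finset.sum_eq_single_of_mem (1 : Equiv.Perm I) (Finset.mem_univ _)]
  · simp
  · intro σ _ hσ
    have hz : ∏ i, A (σ i) i = 0 := by
      by_contra hp
      have hne : ∀ i, A (σ i) i ≠ 0 := by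
        intro i hi
        exact hp (Finset.prod_eq_zero (Finset.mem_univ i) hi)
      have hle : ∀ i, w i ≤ w (σ i) := by
        intro i
        rcases h _ _ (hne i) with h1 | h1
        · rw [h1]
        · exact h1.le
      obtain ⟨i0, hi0⟩ : ∃ i, σ i ≠ i := by
        by_contra hc
        push_neg at hc
        exact hσ (Equiv.ext hc)
      have hlt : w i0 < w (σ i0) := by
        rcases h _ _ (hne i0) with h1 | h1
        · exact absurd h1 hi0
        · exact h1
      have : ∑ i, w i < ∑ i, w (σ i) :=
        Finset.sum_lt_sum (fun i _ => hle i) ⟨i0, Finset.mem_univ _, hlt⟩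
      rw [Equiv.sum_comp σ w] at this
      exact lt_irrefl _ this
    rw [hz, smul_zero]

/-- `d`-th finite difference of `f` at `0`. -/
def dlt (d : ℕ) (f : ℕ → F) : F :=
  ∑ j ∈ Finset.range (d + 1), (-1 : F) ^ (d + j) * (d.choose j : F) * f j

lemma dlt_zero (f : ℕ → F) : dlt 0 f = f 0 := by simp [dlt]

lemma dlt_succ (d : ℕ) (f : ℕ → F) :
    dlt (d + 1) f = dlt d (fun j => f (j + 1)) - dlt d f := by
  unfold dlt
  rw [Finset.sum_range_succ' (fun j => (-1 : F) ^ (d + 1 + j) * ((d+1).choose j : F) * f j)]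
  have h1 : ∀ j, ((d+1).choose (j+1) : F) = (d.choose j : F) + (d.choose (j+1) : F) := by
    intro j; rw [Nat.choose_succ_succ]; push_cast; ring
  have key : ∑ j ∈ Finset.range (d + 1),
      (-1 : F) ^ (d + 1 + (j + 1)) * ((d+1).choose (j+1) : F) * f (j+1)
      = (∑ j ∈ Finset.range (d + 1), (-1 : F) ^ (d + j) * (d.choose j : F) * f (j+1))
        + ∑ j ∈ Finset.range (d + 1), (-1 : F) ^ (d + j) * (d.choose (j+1) : F) * f (j+1) := by
    rw [← Finset.sum_add_distrib]
    refine Finset.sum_congr rfl (fun j _ => ?_)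
    rw [h1 j]
    have : (-1 : F) ^ (d + 1 + (j + 1)) = (-1 : F) ^ (d + j) := by
      rw [show d + 1 + (j + 1) = (d + j) + 2 by ring, pow_add]
      simp
    rw [this]; ring
  rw [key]
  have h2 : ∑ j ∈ Finset.range (d + 1), (-1 : F) ^ (d + j) * (d.choose (j+1) : F) * f (j+1)
      + (-1:F) ^ (d + 1 + 0) * ((d+1).choose 0 : F) * f 0
      = - dlt d f := by
    unfold dlt
    rw [Finset.sum_range_succ' (fun j => (-1 : F) ^ (d + j) * (d.choose j : F) * f j)]
    rw [Finset.sum_range_succ (fun j => (-1 : F) ^ (d + j) * (d.choose (j+1) : F) * f (j+1))]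
    rw [Nat.choose_succ_self]
    push_cast
    rw [neg_add]
    have : ∀ j, -((-1 : F) ^ (d + (j + 1)) * (d.choose (j+1) : F) * f (j+1))
        = (-1 : F) ^ (d + j) * (d.choose (j+1) : F) * f (j+1) := by
      intro j
      rw [show d + (j + 1) = (d + j) + 1 by ring, pow_succ]
      ring
    rw [← Finset.sum_neg_distrib]
    simp_rw [this]
    rw [pow_add]
    simp
    ring_nf
  calc ∑ j ∈ Finset.range (d + 1), (-1 : F) ^ (d + j) * (d.choose j : F) * f (j+1)
        + ∑ j ∈ Finset.range (d + 1), (-1 : F) ^ (d + j) * (d.choose (j+1) : F) * f (j+1)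
        + (-1:F) ^ (d + 1 + 0) * ((d+1).choose 0 : F) * f 0
      = dlt d (fun j => f (j + 1)) + (∑ j ∈ Finset.range (d + 1),
          (-1 : F) ^ (d + j) * (d.choose (j+1) : F) * f (j+1)
          + (-1:F) ^ (d + 1 + 0) * ((d+1).choose 0 : F) * f 0) := by
        unfold dlt; ring
    _ = dlt d (fun j => f (j + 1)) - dlt d f := by rw [h2]; ring

/-- Newton's forward difference formula. -/
lemma newton_aux (a : ℕ) : ∀ f : ℕ → F,
    f a = ∑ d ∈ Finset.range (a + 1), (a.choose d : F) * dlt d f := by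
  induction a with
  | zero => intro f; simp [dlt_zero]
  | succ a ih =>
    intro f
    rw [Finset.sum_range_succ' (fun d => ((a+1).choose d : F) * dlt d f)]
    have key : ∑ d ∈ Finset.range (a+1), ((a+1).choose (d+1) : F) * dlt (d+1) f
        = (∑ d ∈ Finset.range (a+1), (a.choose d : F) * dlt (d+1) f)
          + ∑ d ∈ Finset.range (a+1), (a.choose (d+1) : F) * dlt (d+1) f := by
      rw [← Finset.sum_add_distrib]
      refine Finset.sum_congr rfl fun d _ => ?_
      rw [Nat.choose_succ_succ]; push_cast; ring
    have e2 : ∑ d ∈ Finset.range (a+1), (a.choose d : F) * dlt (d+1) f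
        = f (a+1) - f a := by
      have hd : ∀ d, dlt (d+1) f = dlt d (fun j => f (j+1)) - dlt d f := fun d => dlt_succ d f
      simp_rw [hd, mul_sub]
      rw [Finset.sum_sub_distrib, ← ih (fun j => f (j+1)), ← ih f]
    have e3 : ∑ d ∈ Finset.range (a+1), (a.choose (d+1) : F) * dlt (d+1) f
        = f a - f 0 := by
      have hs := Finset.sum_range_succ' (fun d => (a.choose d : F) * dlt d f) (a+1)
      have htop : ∑ d ∈ Finset.range (a+1+1), (a.choose d : F) * dlt d f
          = ∑ d ∈ Finset.range (a+1), (a.choose d : F) * dlt d f := by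
        rw [Finset.sum_range_succ]
        simp [Nat.choose_succ_self]
      rw [htop, ← ih f, dlt_zero] at hs
      simp only [Nat.choose_zero_right, Nat.cast_one, one_mul] at hs
      linear_combination -hs
    rw [key, e2, e3, dlt_zero]
    simp

lemma dlt_sum {ι : Type*} (d : ℕ) (s : Finset ι) (c : ι → F) (g : ι → ℕ → F) :
    dlt d (fun j => ∑ k ∈ s, c k * g k j) = ∑ k ∈ s, c k * dlt d (g k) := by
  unfold dlt
  simp only [Finset.mul_sum]
  rw [Finset.sum_comm]
  refine Finset.sum_congr rfl fun k _ => ?_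
  refine Finset.sum_congr rfl fun j _ => ?_
  ring

/-- `∑ (-1)^(d+j) C(d,j) j^t`. -/
def Sd (d t : ℕ) : F := dlt d (fun j => (j : F) ^ t)

lemma Sd_succ (d t : ℕ) :
    Sd (d+1) t = (∑ t' ∈ Finset.range t, (t.choose t' : F) * Sd d t' : F) := by
  unfold Sd
  rw [dlt_succ]
  have h1 : (fun j => ((j+1 : ℕ) : F) ^ t)
      = fun (j : ℕ) => ∑ t' ∈ Finset.range (t+1), (t.choose t' : F) * (j : F) ^ t' := by
    funext j
    push_cast
    rw [add_pow]
    refine Finset.sum_congr rfl fun t' _ => ?_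
    rw [one_pow]
    ring
  rw [h1, dlt_sum d (Finset.range (t+1)) (fun t' => (t.choose t' : F)) (fun t' j => (j:F)^t')]
  rw [Finset.sum_range_succ, Nat.choose_self]
  simp [Sd]

lemma Sd_spec (d : ℕ) : (∀ t < d, (Sd d t : F) = 0) ∧ (Sd d d : F) = d.factorial := by
  induction d with
  | zero =>
    constructor
    · intro t ht; omega
    · simp [Sd, dlt_zero]
  | succ d ih =>
    obtain ⟨h1, h2⟩ := ih
    have hvan : ∀ t < d + 1, (Sd (d+1) t : F) = 0 := by
      intro t ht
      rw [Sd_succ]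
      refine Finset.sum_eq_zero fun t' ht' => ?_
      rw [h1 t' (by simp at ht'; omega)]
      ring
    refine ⟨hvan, ?_⟩
    rw [Sd_succ]
    rw [Finset.sum_range_succ]
    rw [h2]
    have : ∑ t' ∈ Finset.range d, ((d+1).choose t' : F) * Sd d t' = 0 := by
      refine Finset.sum_eq_zero fun t' ht' => ?_
      rw [h1 t' (by simpa using ht')]
      ring
    rw [this, Nat.choose_succ_self_right]
    rw [Nat.factorial_succ]
    push_cast
    ring

/-- `∑ (-1)^(d+j) C(d,j) (x+j)^g`, the `d`-th finite difference of `(x+·)^g` at `0`. -/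
def Dd (d g : ℕ) (x : F) : F := dlt d (fun j => (x + (j : ℕ)) ^ g)

lemma Dd_expand (d g : ℕ) (x : F) :
    Dd d g x = ∑ t ∈ Finset.range (g+1), ((g.choose t : F) * x ^ (g - t)) * Sd d t := by
  unfold Dd
  have h1 : (fun j => (x + ((j : ℕ) : F)) ^ g)
      = fun (j : ℕ) => ∑ t ∈ Finset.range (g+1), ((g.choose t : F) * x ^ (g - t)) * ((j:F) ^ t) := by
    funext j
    rw [add_comm x, add_pow]
    refine Finset.sum_congr rfl fun t _ => ?_
    ring
  rw [h1, dlt_sum d (Finset.range (g+1)) (fun t => (g.choose t : F) * x ^ (g - t))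
    (fun t j => (j:F)^t)]
  rfl

lemma Dd_vanish {d g : ℕ} (h : g < d) (x : F) : Dd d g x = 0 := by
  rw [Dd_expand]
  refine Finset.sum_eq_zero fun t ht => ?_
  rw [(Sd_spec d).1 t (by simp at ht; omega)]
  ring

lemma Dd_diag (g : ℕ) (x : F) : Dd g g x = (g.factorial : F) := by
  rw [Dd_expand, Finset.sum_range_succ]
  have : ∑ t ∈ Finset.range g, ((g.choose t : F) * x ^ (g - t)) * Sd g t = 0 := by
    refine Finset.sum_eq_zero fun t ht => ?_
    rw [(Sd_spec g).1 t (by simpa using ht)]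
    ring
  rw [this, (Sd_spec g).2, Nat.choose_self]
  simp

/-- Newton expansion of `(x+a)^g` in terms of binomials `C(a,d)`. -/
lemma newton_pow (N a g : ℕ) (ha : a ≤ N) (x : F) :
    (x + (a : ℕ)) ^ g = ∑ d ∈ Finset.range (N + 1), (a.choose d : F) * Dd d g x := by
  have h0 := newton_aux a (fun j => (x + (j : ℕ)) ^ g)
  have hext : ∑ d ∈ Finset.range (a + 1), (a.choose d : F) * dlt d (fun j => (x + (j : ℕ)) ^ g)
      = ∑ d ∈ Finset.range (N + 1), (a.choose d : F) * dlt d (fun j => (x + (j : ℕ)) ^ g) := by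
    refine Finset.sum_subset (by intro t ht; simp at ht ⊢; omega) ?_
    intro d _ hd
    simp only [Finset.mem_range, not_lt] at hd
    rw [Nat.choose_eq_zero_of_lt (by omega)]
    simp
  simp only [Dd]
  rw [← hext, ← h0]

lemma hockey (m N : ℕ) :
    ∑ t ∈ Finset.range N, (t + m).choose m = (N + m).choose (m + 1) := by
  induction N with
  | zero => simp [Nat.choose_eq_zero_of_lt]
  | succ N ih =>
    rw [Finset.sum_range_succ, ih]
    rw [show N + 1 + m = (N + m) + 1 by ring, Nat.choose_succ_succ (N+m) m]
    simp only [Nat.succ_eq_add_one]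
    omega

lemma cnt_eq (n : ℕ) : ∀ (m N : ℕ), N ≤ n →
    ((Finset.univ : Finset (Fin m → Fin (n+1))).filter
      (fun f => ∑ i, (f i : ℕ) ≤ N)).card = (N + m).choose m := by
  intro m
  induction m with
  | zero =>
    intro N _
    rw [Finset.filter_true_of_mem (fun f _ => by simp)]
    simp
  | succ m ih =>
    intro N hN
    rw [Finset.card_filter]
    rw [← Equiv.sum_comp (Fin.snocEquiv (fun _ => Fin (n+1)))
      (fun f => if ∑ i, (f i : ℕ) ≤ N then (1:ℕ) else 0)]
    rw [Fintype.sum_prod_type]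
    have hsnoc : ∀ (a : Fin (n+1)) (g : Fin m → Fin (n+1)),
        ∑ i, ((Fin.snocEquiv (fun _ => Fin (n+1)) (a, g)) i : ℕ)
        = (∑ i, (g i : ℕ)) + (a : ℕ) := by
      intro a g
      simp only [Fin.snocEquiv]
      rw [Fin.sum_univ_castSucc]
      simp
    have inner : ∀ a : Fin (n+1),
        (∑ g : Fin m → Fin (n+1),
          if ∑ i, ((Fin.snocEquiv (fun _ => Fin (n+1)) (a, g)) i : ℕ) ≤ N then (1:ℕ) else 0)
        = if (a : ℕ) ≤ N then (N - (a:ℕ) + m).choose m else 0 := by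
      intro a
      by_cases ha : (a : ℕ) ≤ N
      · rw [if_pos ha, ← ih (N - (a:ℕ)) (by omega), Finset.card_filter]
        refine Finset.sum_congr rfl fun g _ => ?_
        rw [hsnoc]
        congr 1
        simp only [eq_iff_iff]
        omega
      · rw [if_neg ha]
        refine Finset.sum_eq_zero fun g _ => ?_
        rw [hsnoc, if_neg (by omega)]
    simp_rw [inner]
    rw [Fin.sum_univ_eq_sum_range (fun a => if a ≤ N then (N - a + m).choose m else 0) (n+1)]
    rw [← Finset.sum_subset (Finset.range_subset_range.mpr (show N + 1 ≤ n + 1 by omega))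
      (fun a _ ha => by rw [if_neg (by simp at ha; omega)])]
    have : ∑ a ∈ Finset.range (N+1), (if a ≤ N then (N - a + m).choose m else 0)
        = ∑ a ∈ Finset.range (N+1), (N - a + m).choose m := by
      refine Finset.sum_congr rfl fun a ha => ?_
      rw [if_pos (by simp at ha; omega)]
    rw [this]
    have : ∑ a ∈ Finset.range (N+1), (N - a + m).choose m
        = ∑ a ∈ Finset.range (N+1), (N + 1 - 1 - a + m).choose m := by
      refine Finset.sum_congr rfl fun a ha => ?_
      norm_num
    rw [this, Finset.sum_range_reflect (fun a => (a + m).choose m) (N+1), hockey]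
    congr 1
    omega


/-- Vectors of `m` parts with sum at most `n`. -/
abbrev SI (n m : ℕ) := {f : Fin m → Fin (n+1) // ∑ i, (f i : ℕ) ≤ n}

def wt {n m : ℕ} (γ : SI n m) : ℕ := ∑ i, (γ.1 i : ℕ)

lemma wt_le {n m : ℕ} (γ : SI n m) : wt γ ≤ n := γ.2

lemma coord_le_wt {n m : ℕ} (γ : SI n m) (i : Fin m) : (γ.1 i : ℕ) ≤ wt γ :=
  Finset.single_le_sum (f := fun i => (γ.1 i : ℕ)) (fun _ _ => Nat.zero_le _) (Finset.mem_univ i)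

def eC (n m : ℕ) : Comp n (m+1) ≃ SI n m where
  toFun b := ⟨fun i => b.1 i.castSucc, by
    show ∑ i : Fin m, (b.1 i.castSucc : ℕ) ≤ n
    have hb := b.2
    rw [Fin.sum_univ_castSucc] at hb
    omega⟩
  invFun g := ⟨Fin.snoc g.1 (⟨n - ∑ i, (g.1 i : ℕ), by omega⟩ : Fin (n+1)), by
    rw [Fin.sum_univ_castSucc]
    simp only [Fin.snoc_castSucc, Fin.snoc_last]
    have hg := g.2
    omega⟩
  left_inv b := by
    apply Subtype.ext
    funext i
    induction i using Fin.lastCases with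
    | last =>
      simp only [Fin.snoc_last]
      apply Fin.ext
      have hb := b.2
      rw [Fin.sum_univ_castSucc] at hb
      simp only
      omega
    | cast i => simp [Fin.snoc_castSucc]
  right_inv g := by
    apply Subtype.ext
    funext i
    simp [Fin.snoc_castSucc]

lemma eC_symm_castSucc {n m : ℕ} (g : SI n m) (i : Fin m) :
    ((eC n m).symm g).1 i.castSucc = g.1 i := by
  simp [eC]

lemma eC_symm_last {n m : ℕ} (g : SI n m) :
    ((((eC n m).symm g).1 (Fin.last m)) : ℕ) = n - wt g := by
  simp [eC, wt]

lemma prod_Icc_one (a : ℕ) : ∏ v ∈ Finset.Icc 1 a, v = a.factorial := by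
  rw [← Finset.prod_range_add_one_eq_factorial]
  rw [← Finset.Ico_add_one_right_eq_Icc, Finset.prod_Ico_eq_prod_range]
  exact Finset.prod_congr rfl fun x _ => by omega

lemma sub_as_sum (n w : ℕ) (hw : w ≤ n) :
    n - w = ∑ i ∈ Finset.Icc 1 n, (if w ≤ n - i then 1 else 0) := by
  rw [← Finset.sum_filter]
  have h : (Finset.Icc 1 n).filter (fun i => w ≤ n - i) = Finset.Icc 1 (n - w) := by
    ext i
    simp only [Finset.mem_filter, Finset.mem_Icc]
    omega
  rw [h]
  simp only [Finset.sum_const, smul_eq_mul, mul_one, Nat.card_Icc]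
  omega

lemma sum_SI {n m : ℕ} {M : Type*} [AddCommMonoid M] (f : (Fin m → Fin (n+1)) → M) :
    (∑ γ : SI n m, f γ.1)
      = ∑ g ∈ (Finset.univ.filter (fun g : Fin m → Fin (n+1) => ∑ i, (g i : ℕ) ≤ n)), f g := by
  exact (Finset.sum_subtype _ (by intro x; simp) f).symm

lemma prod_SI {n m : ℕ} {M : Type*} [CommMonoid M] (f : (Fin m → Fin (n+1)) → M) :
    (∏ γ : SI n m, f γ.1)
      = ∏ g ∈ (Finset.univ.filter (fun g : Fin m → Fin (n+1) => ∑ i, (g i : ℕ) ≤ n)), f g := by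
  exact (Finset.prod_subtype _ (by intro x; simp) f).symm

lemma sumE (n m : ℕ) : ∑ β : SI n m, (n - wt β) = (n + m).choose (m + 1) := by
  calc ∑ β : SI n m, (n - wt β)
      = ∑ β : SI n m, ∑ i ∈ Finset.Icc 1 n, (if wt β ≤ n - i then 1 else 0) :=
        Finset.sum_congr rfl (fun β _ => sub_as_sum n (wt β) (wt_le β))
    _ = ∑ i ∈ Finset.Icc 1 n, ∑ β : SI n m, (if wt β ≤ n - i then 1 else 0) :=
        Finset.sum_comm
    _ = ∑ i ∈ Finset.Icc 1 n, (n - i + m).choose m := by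
        refine Finset.sum_congr rfl fun i hi => ?_
        have hi' : 1 ≤ i ∧ i ≤ n := by simpa using hi
        show (∑ β : SI n m, if (∑ j, (β.1 j : ℕ)) ≤ n - i then 1 else 0) = _
        rw [sum_SI (fun g => if (∑ j, (g j : ℕ)) ≤ n - i then 1 else 0)]
        rw [Finset.sum_filter]
        have hmerge : ∀ g : Fin m → Fin (n+1),
            (if (∑ j, (g j:ℕ)) ≤ n then (if (∑ j, (g j:ℕ)) ≤ n - i then (1:ℕ) else 0) else 0)
            = (if (∑ j, (g j:ℕ)) ≤ n - i then 1 else 0) := by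
          intro g; split_ifs <;> omega
        rw [Finset.sum_congr rfl (fun g _ => hmerge g), ← Finset.card_filter]
        exact cnt_eq n m (n - i) (by omega)
    _ = (n + m).choose (m + 1) := by
        rw [← Finset.Ico_add_one_right_eq_Icc, Finset.sum_Ico_eq_sum_range]
        have h : ∀ x ∈ Finset.range (n + 1 - 1), (n - (1 + x) + m).choose m
            = ((n - 1 - x) + m).choose m := by
          intro x _
          congr 1
          omega
        rw [Finset.sum_congr rfl h]
        have := Finset.sum_range_reflect (fun t => (t + m).choose m) n
        simp only [Nat.add_sub_cancel] at this ⊢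
        rw [this, hockey]

lemma sum_split {n m : ℕ} (f : Fin m → Fin (n+1)) (i0 : Fin m) :
    ∑ i, (f i : ℕ) = (f i0 : ℕ) + ∑ i ∈ Finset.univ \ {i0}, (f i : ℕ) := by
  have h := Finset.sum_update_of_mem (Finset.mem_univ i0) (fun j => (f j : ℕ)) ((f i0 : ℕ))
  rw [Function.update_eq_self i0 (fun j => (f j : ℕ))] at h
  exact h

lemma sum_update_coe {n m : ℕ} (f : Fin m → Fin (n+1)) (i0 : Fin m) (z : Fin (n+1)) :
    ∑ i, ((Function.update f i0 z) i : ℕ) = (z : ℕ) + ∑ i ∈ Finset.univ \ {i0}, (f i : ℕ) := by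
  have h : ∀ i, ((Function.update f i0 z) i : ℕ)
      = Function.update (fun j => (f j : ℕ)) i0 (z : ℕ) i :=
    fun i => Function.apply_update (fun (_ : Fin m) (v : Fin (n+1)) => (v : ℕ)) f i0 z i
  simp_rw [h]
  exact Finset.sum_update_of_mem (Finset.mem_univ i0) _ _

lemma cnt_shift (n m : ℕ) (i0 : Fin m) (v : ℕ) (hvn : v ≤ n) :
    ((Finset.univ : Finset (Fin m → Fin (n+1))).filter
      (fun f => (∑ i, (f i : ℕ)) ≤ n ∧ v ≤ (f i0 : ℕ))).card
    = (n - v + m).choose m := by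
  rw [← cnt_eq n m (n - v) (by omega)]
  refine Finset.card_nbij'
    (fun f => Function.update f i0 (⟨(f i0 : ℕ) - v, by have := (f i0).isLt; omega⟩ : Fin (n+1)))
    (fun g => Function.update g i0 (⟨min n ((g i0 : ℕ) + v), by omega⟩ : Fin (n+1)))
    ?_ ?_ ?_ ?_
  · intro f hf
    simp only [Finset.mem_coe, Finset.mem_filter, Finset.mem_univ, true_and] at hf ⊢
    rw [sum_update_coe]
    have := sum_split f i0
    simp only
    omega
  · intro g hg
    simp only [Finset.mem_coe, Finset.mem_filter, Finset.mem_univ, true_and] at hg ⊢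
    rw [sum_update_coe]
    have h1 := sum_split g i0
    have h2 : (g i0 : ℕ) ≤ ∑ i, (g i : ℕ) := coord_le_wt ⟨g, by omega⟩ i0
    constructor
    · simp only
      omega
    · rw [Function.update_self]
      simp only
      omega
  · intro f hf
    simp only [Finset.mem_coe, Finset.mem_filter, Finset.mem_univ, true_and] at hf
    beta_reduce
    rw [Function.update_idem]
    simp only [Function.update_self]
    have hlt := (f i0).isLt
    have heq : (⟨min n (((⟨(f i0 : ℕ) - v, by omega⟩ : Fin (n+1)) : ℕ) + v), by omega⟩ : Fin (n+1))
        = f i0 := by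
      apply Fin.ext
      simp only
      omega
    rw [heq]
    exact Function.update_eq_self i0 f
  · intro g hg
    simp only [Finset.mem_coe, Finset.mem_filter, Finset.mem_univ, true_and] at hg
    have h2 : (g i0 : ℕ) ≤ ∑ i, (g i : ℕ) := coord_le_wt ⟨g, by omega⟩ i0
    beta_reduce
    rw [Function.update_idem]
    simp only [Function.update_self]
    have heq : (⟨((⟨min n ((g i0 : ℕ) + v), by omega⟩ : Fin (n+1)) : ℕ) - v, by
        have := (g i0).isLt; omega⟩ : Fin (n+1)) = g i0 := by
      apply Fin.ext
      simp only
      omega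
    rw [heq]
    exact Function.update_eq_self i0 g

lemma prodFact (n m : ℕ) :
    (∏ γ : SI n m, ∏ i, ((γ.1 i : ℕ)).factorial)
      = ∏ v ∈ Finset.Icc 1 n, v ^ (m * ((n - v + m).choose m)) := by
  have h1 : ∀ (a : ℕ), a ≤ n →
      a.factorial = ∏ v ∈ Finset.Icc 1 n, v ^ (if v ≤ a then 1 else 0) := by
    intro a ha
    rw [← prod_Icc_one a]
    have h2 : ∀ v : ℕ, v ^ (if v ≤ a then 1 else 0) = (if v ≤ a then v else 1) := by
      intro v; split_ifs <;> simp
    rw [Finset.prod_congr rfl (fun v _ => h2 v)]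
    rw [Finset.prod_ite, Finset.prod_const_one, mul_one]
    have h3 : (Finset.Icc 1 n).filter (fun v => v ≤ a) = Finset.Icc 1 a := by
      ext v
      simp only [Finset.mem_filter, Finset.mem_Icc]
      omega
    rw [h3]
  calc (∏ γ : SI n m, ∏ i, ((γ.1 i : ℕ)).factorial)
      = ∏ γ : SI n m, ∏ i : Fin m,
          ∏ v ∈ Finset.Icc 1 n, v ^ (if v ≤ (γ.1 i : ℕ) then 1 else 0) := by
        refine Finset.prod_congr rfl fun γ _ => Finset.prod_congr rfl fun i _ => ?_
        exact h1 _ (le_trans (coord_le_wt γ i) (wt_le γ))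
    _ = ∏ γ : SI n m, ∏ v ∈ Finset.Icc 1 n,
          ∏ i : Fin m, v ^ (if v ≤ (γ.1 i : ℕ) then 1 else 0) :=
        Finset.prod_congr rfl fun γ _ => Finset.prod_comm
    _ = ∏ v ∈ Finset.Icc 1 n, ∏ γ : SI n m,
          ∏ i : Fin m, v ^ (if v ≤ (γ.1 i : ℕ) then 1 else 0) :=
        Finset.prod_comm
    _ = ∏ v ∈ Finset.Icc 1 n, v ^ (m * ((n - v + m).choose m)) := by
        refine Finset.prod_congr rfl fun v hv => ?_
        have hv' : 1 ≤ v ∧ v ≤ n := by simpa using hv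
        rw [Finset.prod_congr rfl (fun γ (_ : γ ∈ Finset.univ) =>
          Finset.prod_pow_eq_pow_sum Finset.univ
            (fun i => if v ≤ (γ.1 i : ℕ) then 1 else 0) v)]
        rw [Finset.prod_pow_eq_pow_sum]
        congr 1
        rw [Finset.sum_comm]
        have hper : ∀ i : Fin m,
            (∑ γ : SI n m, if v ≤ (γ.1 i : ℕ) then 1 else 0) = (n - v + m).choose m := by
          intro i
          rw [sum_SI (fun g => if v ≤ (g i : ℕ) then 1 else 0)]
          rw [Finset.sum_filter]
          rw [← cnt_shift n m i v (by omega)]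
          rw [Finset.card_filter]
          refine Finset.sum_congr rfl fun g _ => ?_
          split_ifs <;> simp_all
        rw [Finset.sum_congr rfl (fun i _ => hper i)]
        simp [Finset.sum_const, Finset.card_univ, mul_comm]

section main

open MvPolynomial

variable {F : Type*} [Field F]

/-- Pack a vector in `SI n m` as a finitely supported function. -/
noncomputable def ψ {n m : ℕ} (γ : SI n m) : Fin m →₀ ℕ :=
  Finsupp.equivFunOnFinite.symm (fun i => (γ.1 i : ℕ))

lemma ψ_apply {n m : ℕ} (γ : SI n m) (i : Fin m) : ψ γ i = (γ.1 i : ℕ) := rfl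

lemma ψ_inj {n m : ℕ} : Function.Injective (ψ (n := n) (m := m)) := by
  intro a b h
  apply Subtype.ext
  funext i
  apply Fin.ext
  have := DFunLike.congr_fun h i
  rwa [ψ_apply, ψ_apply] at this

lemma ψ_sum {n m : ℕ} (γ : SI n m) : ((ψ γ).sum fun _ e => e) = wt γ := by
  rw [Finsupp.sum_fintype _ _ (fun _ => rfl)]
  rfl

variable (n m : ℕ) (x : Fin (m+1) → F)

/-- `A` matrix: evaluation of monomials in the first `m` coordinates. -/
noncomputable def Amat : Matrix (SI n m) (SI n m) F :=
  fun a γ => ∏ i, (x i.castSucc + ((a.1 i : ℕ) : F)) ^ (γ.1 i : ℕ)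

/-- Binomial coefficient matrix. -/
noncomputable def Fmat : Matrix (SI n m) (SI n m) F :=
  fun a δ => ∏ i, (((a.1 i : ℕ).choose (δ.1 i : ℕ) : ℕ) : F)

/-- Finite difference matrix. -/
noncomputable def Cmat : Matrix (SI n m) (SI n m) F :=
  fun δ γ => ∏ i, Dd (δ.1 i : ℕ) (γ.1 i : ℕ) (x i.castSucc)

/-- The polynomial attached to a column. -/
noncomputable def QQ (c : F) (β : SI n m) : MvPolynomial (Fin m) F :=
  monomial (ψ β) 1 * (C c - ∑ i, X i) ^ (n - wt β)

/-- Transition matrix. -/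
noncomputable def Tmat (c : F) : Matrix (SI n m) (SI n m) F :=
  fun γ β => coeff (ψ γ) (QQ n m c β)

lemma Tmat_ne_zero {n m : ℕ} {c : F} {γ β : SI n m} (h : Tmat n m c γ β ≠ 0) :
    γ = β ∨ wt β < wt γ := by
  rw [Tmat, QQ, coeff_monomial_mul'] at h
  by_cases hle : ψ β ≤ ψ γ
  · have hc : ∀ i, (β.1 i : ℕ) ≤ (γ.1 i : ℕ) := by
      intro i
      have := hle i
      rwa [ψ_apply, ψ_apply] at this
    by_cases heq : γ = β
    · exact Or.inl heq
    · right
      have hne : ∃ i, (β.1 i : ℕ) ≠ (γ.1 i : ℕ) := by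
        by_contra hcon
        push_neg at hcon
        exact heq (Subtype.ext (funext fun i => (Fin.ext (hcon i)).symm))
      obtain ⟨i0, hi0⟩ := hne
      exact Finset.sum_lt_sum (fun i _ => hc i)
        ⟨i0, Finset.mem_univ _, lt_of_le_of_ne (hc i0) hi0⟩
  · rw [if_neg hle] at h
    exact absurd rfl h

lemma Tmat_diag {n m : ℕ} (c : F) (γ : SI n m) :
    Tmat n m c γ γ = c ^ (n - wt γ) := by
  rw [Tmat, QQ, coeff_monomial_mul', if_pos le_rfl, tsub_self, one_mul]
  rw [← constantCoeff_eq]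
  rw [map_pow, map_sub, constantCoeff_C, map_sum]
  simp [constantCoeff_X]

lemma det_Tmat (c : F) :
    (Tmat n m c).det = c ^ ((n + m).choose (m + 1)) := by
  rw [det_tri (Tmat n m c) wt (fun γ β h => Tmat_ne_zero h)]
  calc ∏ γ : SI n m, Tmat n m c γ γ
      = ∏ γ : SI n m, c ^ (n - wt γ) :=
        Finset.prod_congr rfl fun γ _ => Tmat_diag c γ
    _ = c ^ (∑ γ : SI n m, (n - wt γ)) := Finset.prod_pow_eq_pow_sum _ _ _
    _ = c ^ ((n + m).choose (m + 1)) := by rw [sumE]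

lemma det_Fmat : (Fmat (F := F) n m).det = 1 := by
  rw [det_tri (Fmat n m) wt]
  · calc ∏ a : SI n m, Fmat (F := F) n m a a
        = ∏ a : SI n m, 1 := by
          refine Finset.prod_congr rfl fun a _ => ?_
          rw [Fmat]
          simp
      _ = 1 := Finset.prod_const_one
  · intro a δ h
    rw [Fmat] at h
    have hc : ∀ i, (δ.1 i : ℕ) ≤ (a.1 i : ℕ) := by
      intro i
      by_contra hlt
      push_neg at hlt
      apply h
      refine Finset.prod_eq_zero (Finset.mem_univ i) ?_
      rw [Nat.choose_eq_zero_of_lt hlt]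
      simp
    by_cases heq : a = δ
    · exact Or.inl heq
    · right
      have hne : ∃ i, (δ.1 i : ℕ) ≠ (a.1 i : ℕ) := by
        by_contra hcon
        push_neg at hcon
        exact heq (Subtype.ext (funext fun i => (Fin.ext (hcon i)).symm))
      obtain ⟨i0, hi0⟩ := hne
      exact Finset.sum_lt_sum (fun i _ => hc i)
        ⟨i0, Finset.mem_univ _, lt_of_le_of_ne (hc i0) hi0⟩

lemma det_Cmat : (Cmat n m x).det
    = ∏ γ : SI n m, ∏ i, (((γ.1 i : ℕ).factorial : ℕ) : F) := by
  rw [← Matrix.det_transpose]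
  rw [det_tri ((Cmat n m x).transpose) wt]
  · refine Finset.prod_congr rfl fun γ _ => ?_
    rw [Matrix.transpose_apply, Cmat]
    exact Finset.prod_congr rfl fun i _ => Dd_diag _ _
  · intro γ δ h
    rw [Matrix.transpose_apply, Cmat] at h
    have hc : ∀ i, (δ.1 i : ℕ) ≤ (γ.1 i : ℕ) := by
      intro i
      by_contra hlt
      push_neg at hlt
      apply h
      exact Finset.prod_eq_zero (Finset.mem_univ i) (Dd_vanish hlt _)
    by_cases heq : γ = δ
    · exact Or.inl heq
    · right
      have hne : ∃ i, (δ.1 i : ℕ) ≠ (γ.1 i : ℕ) := by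
        by_contra hcon
        push_neg at hcon
        exact heq (Subtype.ext (funext fun i => (Fin.ext (hcon i)).symm))
      obtain ⟨i0, hi0⟩ := hne
      exact Finset.sum_lt_sum (fun i _ => hc i)
        ⟨i0, Finset.mem_univ _, lt_of_le_of_ne (hc i0) hi0⟩

lemma Amat_eq : Amat n m x = Fmat n m * Cmat n m x := by
  ext a γ
  rw [Matrix.mul_apply, Amat]
  have h1 : ∀ i : Fin m, (x i.castSucc + ((a.1 i : ℕ) : F)) ^ (γ.1 i : ℕ)
      = ∑ d : Fin (n+1), ((a.1 i : ℕ).choose (d : ℕ) : F)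
          * Dd (d : ℕ) (γ.1 i : ℕ) (x i.castSucc) := by
    intro i
    rw [newton_pow n (a.1 i : ℕ) (γ.1 i : ℕ) (by have := (a.1 i).isLt; omega) (x i.castSucc)]
    rw [← Fin.sum_univ_eq_sum_range
      (fun d => ((a.1 i : ℕ).choose d : F) * Dd d (γ.1 i : ℕ) (x i.castSucc)) (n+1)]
  rw [Finset.prod_congr rfl (fun i _ => h1 i)]
  rw [Fintype.prod_sum]
  have hres : ∑ δ : Fin m → Fin (n+1), ∏ i, (((a.1 i : ℕ).choose (δ i : ℕ) : ℕ) : F)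
        * Dd (δ i : ℕ) (γ.1 i : ℕ) (x i.castSucc)
      = ∑ δ ∈ Finset.univ.filter (fun g : Fin m → Fin (n+1) => ∑ i, (g i : ℕ) ≤ n),
          ∏ i, (((a.1 i : ℕ).choose (δ i : ℕ) : ℕ) : F)
            * Dd (δ i : ℕ) (γ.1 i : ℕ) (x i.castSucc) := by
    refine (Finset.sum_subset (Finset.filter_subset _ _) ?_).symm
    intro δ _ hδ
    simp only [Finset.mem_filter, Finset.mem_univ, true_and, not_le] at hδ
    have hex : ∃ i, (a.1 i : ℕ) < (δ i : ℕ) := by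
      by_contra hcon
      push_neg at hcon
      have : ∑ i, (δ i : ℕ) ≤ ∑ i, (a.1 i : ℕ) := Finset.sum_le_sum (fun i _ => hcon i)
      have := wt_le a
      rw [wt] at this
      omega
    obtain ⟨i0, hi0⟩ := hex
    refine Finset.prod_eq_zero (Finset.mem_univ i0) ?_
    rw [Nat.choose_eq_zero_of_lt hi0]
    simp
  rw [hres, ← sum_SI (fun g => ∏ i, (((a.1 i : ℕ).choose (g i : ℕ) : ℕ) : F)
    * Dd (g i : ℕ) (γ.1 i : ℕ) (x i.castSucc))]
  refine Finset.sum_congr rfl fun δ _ => ?_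
  rw [Fmat, Cmat, ← Finset.prod_mul_distrib]

lemma eval_QQ {n m : ℕ} (c : F) (b : SI n m) (z : Fin m → F) :
    eval z (QQ n m c b)
      = (∏ i, z i ^ (b.1 i : ℕ)) * (c - ∑ i, z i) ^ (n - wt b) := by
  rw [QQ, map_mul, eval_monomial, map_pow, map_sub, eval_C, map_sum]
  simp only [eval_X]
  rw [Finsupp.prod_pow]
  simp only [ψ_apply, one_mul]

lemma totalDegree_QQ {n m : ℕ} (c : F) (b : SI n m) :
    (QQ n m c b).totalDegree ≤ n := by
  rw [QQ]
  calc (monomial (ψ b) (1:F) * (C c - ∑ i, X i) ^ (n - wt b)).totalDegree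
      ≤ (monomial (ψ b) (1:F)).totalDegree
        + ((C c - ∑ i : Fin m, X i) ^ (n - wt b)).totalDegree := totalDegree_mul _ _
    _ ≤ wt b + (n - wt b) * 1 := by
        gcongr
        · rw [totalDegree_monomial _ (one_ne_zero), ψ_sum]
        · calc ((C c - ∑ i : Fin m, X i) ^ (n - wt b)).totalDegree
              ≤ (n - wt b) * (C c - ∑ i : Fin m, X i).totalDegree := totalDegree_pow _ _
          _ ≤ (n - wt b) * 1 := by
              gcongr
              calc (C c - ∑ i : Fin m, X i).totalDegree
                  ≤ max (C c : MvPolynomial (Fin m) F).totalDegree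
                      (∑ i : Fin m, X i : MvPolynomial (Fin m) F).totalDegree :=
                    totalDegree_sub _ _
                _ ≤ 1 := by
                    rw [totalDegree_C]
                    simp only [max_le_iff]
                    refine ⟨by omega, ?_⟩
                    refine le_trans (totalDegree_finset_sum _ _) ?_
                    refine Finset.sup_le fun i _ => ?_
                    rw [totalDegree_X]
    _ ≤ n := by have := wt_le b; omega

lemma eval_QQ_sum {n m : ℕ} (c : F) (b : SI n m) (z : Fin m → F) :
    eval z (QQ n m c b)
      = ∑ γ : SI n m, (∏ i, z i ^ (γ.1 i : ℕ)) * coeff (ψ γ) (QQ n m c b) := by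
  rw [eval_eq']
  have hsupp : (QQ n m c b).support ⊆ Finset.univ.image (ψ (n := n) (m := m)) := by
    intro d hd
    have hdeg := le_totalDegree hd
    have htd := totalDegree_QQ c b
    have hs : (d.sum fun _ e => e) = ∑ i, d i := Finsupp.sum_fintype _ _ (fun _ => rfl)
    have hsum_d : ∑ i, d i ≤ n := by
      rw [← hs]
      exact le_trans hdeg htd
    have hcoord : ∀ i, d i ≤ n := fun i =>
      le_trans (Finset.single_le_sum (f := fun i => d i) (fun _ _ => Nat.zero_le _)
        (Finset.mem_univ i)) hsum_d
    refine Finset.mem_image.mpr ⟨⟨fun i => (⟨d i, by have := hcoord i; omega⟩ : Fin (n+1)), ?_⟩,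
      Finset.mem_univ _, ?_⟩
    · simpa using hsum_d
    · ext i
      rfl
  rw [Finset.sum_subset hsupp (fun d _ hd => by
    rw [notMem_support_iff.mp hd, zero_mul])]
  rw [Finset.sum_image (fun γ _ γ' _ h => ψ_inj h)]
  refine Finset.sum_congr rfl fun γ _ => ?_
  rw [mul_comm]
  rfl

lemma M_eq : (Matrix.reindex (eC n m) (eC n m) (Matrix.of fun α β : Comp n (m+1) =>
      ∏ i, (x i + ((α.1 i : ℕ) : F)) ^ ((β.1 i : ℕ))))
    = Amat n m x * Tmat n m ((∑ i, x i) + (n : F)) := by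
  ext a b
  rw [Matrix.reindex_apply, Matrix.submatrix_apply, Matrix.of_apply, Matrix.mul_apply]
  have hLHS : (∏ i, (x i + ((((eC n m).symm a).1 i : ℕ) : F)) ^ ((((eC n m).symm b).1 i : ℕ)))
      = (∏ i : Fin m, (x i.castSucc + ((a.1 i : ℕ) : F)) ^ (b.1 i : ℕ))
        * (((∑ i, x i) + (n : F)) - ∑ i : Fin m, (x i.castSucc + ((a.1 i : ℕ) : F)))
          ^ (n - wt b) := by
    rw [Fin.prod_univ_castSucc]
    congr 1
    · refine Finset.prod_congr rfl fun i _ => ?_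
      rw [eC_symm_castSucc, eC_symm_castSucc]
    · rw [eC_symm_last a, eC_symm_last b]
      congr 1
      have h1 : ∑ i : Fin (m+1), x i = ∑ i : Fin m, x i.castSucc + x (Fin.last m) :=
        Fin.sum_univ_castSucc _
      have h2 : ((n - wt a : ℕ) : F) = (n : F) - (wt a : F) :=
        Nat.cast_sub (wt_le a)
      have h3 : ((wt a : ℕ) : F) = ∑ i : Fin m, ((a.1 i : ℕ) : F) := by
        rw [wt]
        push_cast
        rfl
      rw [h2, h1, Finset.sum_add_distrib, ← h3]
      ring
  rw [hLHS]
  have := eval_QQ ((∑ i, x i) + (n : F)) b (fun i => x i.castSucc + ((a.1 i : ℕ) : F))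
  rw [← this, eval_QQ_sum]
  refine Finset.sum_congr rfl fun γ _ => ?_
  rw [Amat, Tmat]

lemma det_main :
    Matrix.det (Matrix.of fun α β : Comp n (m+1) =>
        ∏ i, (x i + ((α.1 i : ℕ) : F)) ^ ((β.1 i : ℕ)))
    = ((∑ i, x i) + (n : F)) ^ ((n + m).choose (m + 1))
      * ∏ v ∈ Finset.Icc 1 n, (v : F) ^ (m * (n - v + m).choose m) := by
  rw [← Matrix.det_reindex_self (eC n m)]
  rw [M_eq n m x, Matrix.det_mul, Amat_eq n m x, Matrix.det_mul]
  rw [det_Fmat, det_Cmat, det_Tmat]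
  rw [one_mul, mul_comm]
  congr 1
  calc ∏ γ : SI n m, ∏ i, (((γ.1 i : ℕ).factorial : ℕ) : F)
      = ((∏ γ : SI n m, ∏ i, ((γ.1 i : ℕ)).factorial : ℕ) : F) := by push_cast; rfl
    _ = ((∏ v ∈ Finset.Icc 1 n, v ^ (m * (n - v + m).choose m) : ℕ) : F) := by rw [prodFact]
    _ = ∏ v ∈ Finset.Icc 1 n, (v : F) ^ (m * (n - v + m).choose m) := by push_cast; rfl

end main

end Stmt5

theorem stmt5 {F : Type*} [Field F] [CharZero F] (n k : ℕ) (hn : 0 < n) (hk : 0 < k)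
    (x : Fin k → F) :
    Matrix.det (Matrix.of fun α β : Comp n k =>
        ∏ i, (x i + ((α.1 i : ℕ) : F)) ^ ((β.1 i : ℕ))) =
      ((∑ i, x i) + (n : F)) ^ ((n + k - 1).choose k) *
        ∏ i ∈ Finset.Icc 1 n, (i : F) ^ ((k - 1) * (n + k - i - 1).choose (k - 1)) := by
  obtain ⟨m, rfl⟩ := Nat.exists_eq_succ_of_ne_zero hk.ne'
  simp only [Nat.succ_eq_add_one]
  rw [Stmt5.det_main n m x]
  have h1 : n + (m + 1) - 1 = n + m := by omega
  rw [h1, Nat.add_sub_cancel]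
  congr 1
  refine Finset.prod_congr rfl fun v hv => ?_
  have hv' : 1 ≤ v ∧ v ≤ n := by simpa using hv
  have h2 : n + (m + 1) - v - 1 = n - v + m := by omega
  rw [h2]
end

section
/- Kernel vector lemma: Fix positive integers n, k, an integer i with 1 ≤ i ≤ n, and a composition ε of n-i into k non-negative parts. Let M be the matrix over the field of rational functions in x_1,...,x_k, λ_1,...,λ_k, indexed by compositions of n into k parts, with entry M(α,β) = ∏_{t=1}^k binom(x_t+λ_t α_t, β_t). Let v be the vector with coordinate (Σ_{t=1}^k δ_t/λ_t)·∏_{t=1}^k binom(δ_t+ε_t, δ_t) at index δ+ε for each composition δ of i into k parts, and 0 at all other indices. Then for every composition α of n into k parts, the α-coordinate of Mv equals ∏_{t=1}^k binom(x_t+λ_t α_t, ε_t) · (n + Σ_{t=1}^k (x_t-ε_t)/λ_t) · binom(Σ_t(x_t+λ_t α_t) - (n-i) - 1, i-1). -/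
open Finset

section Aux
set_option linter.unusedSectionVars false

variable {F : Type*} [Field F] [CharZero F]

lemma descPochhammer_eval_prod (y : F) (m : ℕ) :
    (descPochhammer F m).eval y = ∏ j ∈ Finset.range m, (y - (j : F)) := by
  induction m with
  | zero => simp
  | succ m ih => rw [descPochhammer_succ_eval, Finset.prod_range_succ, ih]

noncomputable example : BinomialRing F := inferInstance

lemma bch_eq_choose (y : F) (m : ℕ) : bch y m = Ring.choose y m := by
  have h := Ring.descPochhammer_eq_factorial_smul_choose (R := F) y m
  rw [← Polynomial.aeval_eq_smeval, Polynomial.aeval_def, ← Polynomial.eval_map,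
    descPochhammer_map (algebraMap ℤ F), descPochhammer_eval_prod] at h
  rw [bch, h, nsmul_eq_mul, mul_div_cancel_left₀] <;>
    exact_mod_cast Nat.factorial_ne_zero m

lemma bch_zero (y : F) : bch y 0 = 1 := by simp [bch]

lemma bch_add_eq (a b : F) (m : ℕ) :
    bch (a + b) m = ∑ p ∈ Finset.HasAntidiagonal.antidiagonal m, bch a p.1 * bch b p.2 := by
  simp only [bch_eq_choose]
  exact Ring.add_choose_eq m (Commute.all a b)

lemma vand {ι : Type*} [DecidableEq ι] (s : Finset ι) (z : ι → F) (m : ℕ) :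
    ∑ δ ∈ Finset.piAntidiag s m, ∏ t ∈ s, bch (z t) (δ t) = bch (∑ t ∈ s, z t) m := by
  induction s using Finset.cons_induction generalizing m with
  | empty =>
    rcases m with _ | m
    · simp [bch_zero]
    · simp [bch_eq_choose, Ring.choose_zero_succ]
  | cons i s hi ih =>
    rw [Finset.piAntidiag_cons, Finset.sum_disjiUnion, Finset.sum_cons, bch_add_eq]
    refine Finset.sum_congr rfl fun p hp => ?_
    rw [Finset.sum_map, ← ih p.2, Finset.mul_sum]
    refine Finset.sum_congr rfl fun g hg => ?_
    have hgi : g i = 0 := by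
      by_contra h
      exact hi ((Finset.mem_piAntidiag.mp hg).2 i h)
    rw [Finset.prod_cons]
    simp only [addRightEmbedding_apply, Pi.add_apply]
    rw [hgi, if_pos trivial, zero_add]
    congr 1
    refine Finset.prod_congr rfl fun t ht => ?_
    rw [if_neg (by rintro rfl; exact hi ht), add_zero]

lemma bch_succ_absorb (y : F) (d : ℕ) :
    ((d + 1 : ℕ) : F) * bch y (d + 1) = y * bch (y - 1) d := by
  have hsplit : ∏ j ∈ Finset.range (d + 1), (y - (j : F))
      = y * ∏ j ∈ Finset.range d, (y - 1 - (j : F)) := by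
    rw [Finset.prod_range_succ']
    have : ∀ j ∈ Finset.range d, (y - ((j + 1 : ℕ) : F)) = (y - 1 - (j : F)) := by
      intro j _; push_cast; ring
    rw [Finset.prod_congr rfl this]
    push_cast
    ring
  have hfac : ((d + 1).factorial : F) = ((d + 1 : ℕ) : F) * (d.factorial : F) := by
    rw [Nat.factorial_succ]; push_cast; ring
  have h1 : ((d + 1 : ℕ) : F) ≠ 0 := by exact_mod_cast Nat.succ_ne_zero d
  rw [bch, bch, hsplit, hfac, mul_div_assoc', mul_div_mul_left _ _ h1, mul_div_assoc]

lemma vand_single {ι : Type*} [DecidableEq ι] (s : Finset ι) {t₀ : ι} (ht : t₀ ∈ s)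
    (z : ι → F) (m : ℕ) :
    ∑ δ ∈ Finset.piAntidiag s (m + 1), ((δ t₀ : ℕ) : F) * ∏ t ∈ s, bch (z t) (δ t)
      = z t₀ * bch ((∑ t ∈ s, z t) - 1) m := by
  classical
  set z' : ι → F := Function.update z t₀ (z t₀ - 1) with hz'
  have hsum' : ∑ t ∈ s, z' t = (∑ t ∈ s, z t) - 1 := by
    rw [hz', Finset.sum_update_of_mem ht, ← Finset.erase_eq]
    have := Finset.add_sum_erase s z ht
    linear_combination this
  have step1 : ∑ δ ∈ (Finset.piAntidiag s (m + 1)).filter (fun δ => δ t₀ ≠ 0),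
        ((δ t₀ : ℕ) : F) * ∏ t ∈ s, bch (z t) (δ t)
      = ∑ δ ∈ Finset.piAntidiag s (m + 1), ((δ t₀ : ℕ) : F) * ∏ t ∈ s, bch (z t) (δ t) := by
    refine Finset.sum_filter_of_ne ?_
    intro δ _ hne
    intro h0
    rw [h0] at hne
    simp at hne
  rw [← step1]
  have step2 : ∑ δ ∈ (Finset.piAntidiag s (m + 1)).filter (fun δ => δ t₀ ≠ 0),
        ((δ t₀ : ℕ) : F) * ∏ t ∈ s, bch (z t) (δ t)
      = ∑ δ' ∈ Finset.piAntidiag s m, z t₀ * ∏ t ∈ s, bch (z' t) (δ' t) := by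
    refine Finset.sum_nbij' (fun δ => Function.update δ t₀ (δ t₀ - 1))
      (fun δ' => Function.update δ' t₀ (δ' t₀ + 1)) ?_ ?_ ?_ ?_ ?_
    · intro δ hδ
      rw [Finset.mem_filter, Finset.mem_piAntidiag] at hδ
      obtain ⟨⟨hsum, hsupp⟩, hne⟩ := hδ
      rw [Finset.mem_piAntidiag]
      constructor
      · rw [Finset.sum_update_of_mem ht, ← Finset.erase_eq]
        have h2 := Finset.add_sum_erase s δ ht
        have h3 : ∑ x ∈ s, δ x = m + 1 := hsum
        omega
      · intro t hts
        rcases eq_or_ne t t₀ with rfl | htt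
        · exact ht
        · simp only [Function.update_of_ne htt] at hts
          exact hsupp t hts
    · intro δ' hδ'
      rw [Finset.mem_piAntidiag] at hδ'
      obtain ⟨hsum, hsupp⟩ := hδ'
      rw [Finset.mem_filter, Finset.mem_piAntidiag]
      refine ⟨⟨?_, ?_⟩, by simp⟩
      · rw [Finset.sum_update_of_mem ht, ← Finset.erase_eq]
        have h2 := Finset.add_sum_erase s δ' ht
        have h3 : ∑ x ∈ s, δ' x = m := hsum
        omega
      · intro t hts
        rcases eq_or_ne t t₀ with rfl | htt
        · exact ht
        · simp only [Function.update_of_ne htt] at hts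
          exact hsupp t hts
    · intro δ hδ
      rw [Finset.mem_filter] at hδ
      obtain ⟨-, hne⟩ := hδ
      funext t
      rcases eq_or_ne t t₀ with rfl | htt
      · simp only [Function.update_self]
        omega
      · simp [Function.update_of_ne htt]
    · intro δ' _
      funext t
      rcases eq_or_ne t t₀ with rfl | htt
      · simp only [Function.update_self]
        omega
      · simp [Function.update_of_ne htt]
    · intro δ hδ
      rw [Finset.mem_filter] at hδ
      obtain ⟨-, hne⟩ := hδ
      obtain ⟨d, hd⟩ := Nat.exists_eq_succ_of_ne_zero hne
      rw [← Finset.prod_erase_mul s _ ht, ← Finset.prod_erase_mul s _ ht]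
      have hprod : ∏ t ∈ s.erase t₀, bch (z t) (δ t)
          = ∏ t ∈ s.erase t₀, bch (z' t) (Function.update δ t₀ (δ t₀ - 1) t) := by
        refine Finset.prod_congr rfl fun t hts => ?_
        have htt : t ≠ t₀ := Finset.ne_of_mem_erase hts
        rw [hz', Function.update_of_ne htt, Function.update_of_ne htt]
      rw [← hprod]
      have habs : ((δ t₀ : ℕ) : F) * bch (z t₀) (δ t₀)
          = z t₀ * bch (z' t₀) (Function.update δ t₀ (δ t₀ - 1) t₀) := by
        rw [Function.update_self, hz', Function.update_self, hd]
        simpa using bch_succ_absorb (z t₀) d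
      calc ((δ t₀ : ℕ) : F) * (( ∏ t ∈ s.erase t₀, bch (z t) (δ t)) * bch (z t₀) (δ t₀))
          = (∏ t ∈ s.erase t₀, bch (z t) (δ t)) * (((δ t₀ : ℕ) : F) * bch (z t₀) (δ t₀)) := by
            ring
        _ = (∏ t ∈ s.erase t₀, bch (z t) (δ t)) *
              (z t₀ * bch (z' t₀) (Function.update δ t₀ (δ t₀ - 1) t₀)) := by rw [habs]
        _ = _ := by ring
  rw [step2, ← Finset.mul_sum, vand, hsum']

lemma bch_choose_split (y : F) (a b : ℕ) :
    (((a + b).choose a : ℕ) : F) * bch y (a + b) = bch y b * bch (y - (b : F)) a := by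
  have hsplit : ∏ j ∈ Finset.range (a + b), (y - (j : F))
      = (∏ j ∈ Finset.range b, (y - (j : F))) * ∏ j ∈ Finset.range a, (y - (b : F) - (j : F)) := by
    rw [add_comm a b, Finset.prod_range_add]
    congr 1
    refine Finset.prod_congr rfl fun j _ => ?_
    push_cast; ring
  have hc : (((a + b).choose a : ℕ) : F) * (a.factorial : F) * (b.factorial : F)
      = ((a + b).factorial : F) := by
    have := Nat.choose_mul_factorial_mul_factorial (Nat.le_add_right a b)
    have h2 : a + b - a = b := by omega
    rw [h2] at this
    exact_mod_cast congrArg (Nat.cast : ℕ → F) this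
  have ha : ((a.factorial : ℕ) : F) ≠ 0 := by exact_mod_cast Nat.factorial_ne_zero a
  have hb : ((b.factorial : ℕ) : F) ≠ 0 := by exact_mod_cast Nat.factorial_ne_zero b
  have hab : (((a + b).factorial : ℕ) : F) ≠ 0 := by exact_mod_cast Nat.factorial_ne_zero (a + b)
  rw [bch, bch, bch, hsplit]
  field_simp
  linear_combination (∏ j ∈ Finset.range b, (y - (j : F))) *
    (∏ j ∈ Finset.range a, (y - (b : F) - (j : F))) * hc

lemma sum_comp_eq {M : Type*} [AddCommMonoid M] (m k : ℕ) (f : (Fin k → ℕ) → M) :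
    ∑ δ : Comp m k, f (fun t => (δ.1 t : ℕ))
      = ∑ d ∈ Finset.piAntidiag (Finset.univ : Finset (Fin k)) m, f d := by
  refine Finset.sum_bij' (fun δ _ => fun t => (δ.1 t : ℕ))
    (fun d hd => ⟨fun t => ⟨d t, ?_⟩, ?_⟩) ?_ ?_ ?_ ?_ ?_
  · have h1 := (Finset.mem_piAntidiag.mp hd).1
    have h2 : d t ≤ ∑ s ∈ Finset.univ, d s :=
      Finset.single_le_sum (fun s _ => Nat.zero_le _) (Finset.mem_univ t)
    have h1' : ∑ s ∈ Finset.univ, d s = m := h1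
    omega
  · exact (Finset.mem_piAntidiag.mp hd).1
  · intro δ _
    rw [Finset.mem_piAntidiag]
    exact ⟨δ.2, fun t _ => Finset.mem_univ t⟩
  · intro d hd
    exact Finset.mem_univ _
  · intro δ _
    apply Subtype.ext
    funext t
    apply Fin.ext
    rfl
  · intro d _
    rfl
  · intro δ _
    rfl

end Aux

theorem stmt12 {F : Type*} [Field F] [CharZero F] (n k m : ℕ) (hn : 0 < n) (hk : 0 < k)
    (hm1 : 1 ≤ m) (hmn : m ≤ n) (ε : Fin k → ℕ) (hε : ∑ t, ε t = n - m)
    (x l : Fin k → F) (hl : ∀ t, l t ≠ 0) :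
    ∀ α : Comp n k,
      Matrix.mulVec
        (Matrix.of fun α β : Comp n k =>
          ∏ t, bch (x t + l t * ((α.1 t : ℕ) : F)) ((β.1 t : ℕ)))
        (fun γ : Comp n k => ∑ δ : Comp m k,
          if ∀ t, (γ.1 t : ℕ) = (δ.1 t : ℕ) + ε t then
            (∑ t, ((δ.1 t : ℕ) : F) / l t) *
              ∏ t, ((((δ.1 t : ℕ) + ε t).choose (δ.1 t : ℕ) : ℕ) : F)
          else 0) α =
      (∏ t, bch (x t + l t * ((α.1 t : ℕ) : F)) (ε t)) *
        ((n : F) + ∑ t, (x t - ((ε t : ℕ) : F)) / l t) *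
        bch ((∑ t, (x t + l t * ((α.1 t : ℕ) : F))) - (((n - m : ℕ) : F)) - 1) (m - 1) := by
  intro α
  obtain ⟨m', rfl⟩ : ∃ m', m = m' + 1 := ⟨m - 1, by omega⟩
  set y : Fin k → F := fun t => x t + l t * ((α.1 t : ℕ) : F) with hy
  set z : Fin k → F := fun t => y t - ((ε t : ℕ) : F) with hzdef
  simp only [Matrix.mulVec, dotProduct, Matrix.of_apply]
  simp only [Finset.mul_sum]
  rw [Finset.sum_comm]
  -- inner β-sum collapses
  have hstep1 : ∀ δ : Comp (m' + 1) k,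
      (∑ β : Comp n k, (∏ t, bch (y t) ((β.1 t : ℕ))) *
        (if ∀ t, (β.1 t : ℕ) = (δ.1 t : ℕ) + ε t then
          (∑ t, ((δ.1 t : ℕ) : F) / l t) *
            ∏ t, ((((δ.1 t : ℕ) + ε t).choose (δ.1 t : ℕ) : ℕ) : F)
        else 0))
      = (∏ t, bch (y t) ((δ.1 t : ℕ) + ε t)) *
        ((∑ t, ((δ.1 t : ℕ) : F) / l t) *
          ∏ t, ((((δ.1 t : ℕ) + ε t).choose (δ.1 t : ℕ) : ℕ) : F)) := by
    intro δ
    rw [sum_comp_eq n k (fun b => (∏ t, bch (y t) (b t)) *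
      (if ∀ t, b t = (δ.1 t : ℕ) + ε t then
        (∑ t, ((δ.1 t : ℕ) : F) / l t) *
          ∏ t, ((((δ.1 t : ℕ) + ε t).choose (δ.1 t : ℕ) : ℕ) : F)
      else 0))]
    have hmem : (fun t => (δ.1 t : ℕ) + ε t) ∈
        Finset.piAntidiag (Finset.univ : Finset (Fin k)) n := by
      rw [Finset.mem_piAntidiag]
      refine ⟨?_, fun t _ => Finset.mem_univ t⟩
      rw [Finset.sum_add_distrib]
      have h1 : ∑ t, (δ.1 t : ℕ) = m' + 1 := δ.2
      have h2 : ∑ t, ε t = n - (m' + 1) := hε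
      omega
    have : ∀ b : Fin k → ℕ, (∀ t, b t = (δ.1 t : ℕ) + ε t) ↔ b = fun t => (δ.1 t : ℕ) + ε t :=
      fun b => (funext_iff).symm
    simp only [this]
    simp only [mul_ite, mul_zero]
    rw [Finset.sum_ite_eq' _ (fun t => (δ.1 t : ℕ) + ε t), if_pos hmem]
  refine (Finset.sum_congr rfl fun δ _ => hstep1 δ).trans ?_
  rw [sum_comp_eq (m' + 1) k (fun d => (∏ t, bch (y t) (d t + ε t)) *
    ((∑ t, ((d t : ℕ) : F) / l t) * ∏ t, ((((d t : ℕ) + ε t).choose (d t : ℕ) : ℕ) : F)))]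
  have hstep3 : ∀ d ∈ Finset.piAntidiag (Finset.univ : Finset (Fin k)) (m' + 1),
      (∏ t, bch (y t) (d t + ε t)) *
        ((∑ t, ((d t : ℕ) : F) / l t) * ∏ t, ((((d t : ℕ) + ε t).choose (d t : ℕ) : ℕ) : F))
      = (∏ t, bch (y t) (ε t)) *
          ((∑ t, ((d t : ℕ) : F) / l t) * ∏ t, bch (z t) (d t)) := by
    intro d _
    have hkey : ∏ t, (((((d t) + ε t).choose (d t) : ℕ) : F) * bch (y t) (d t + ε t))
        = ∏ t, (bch (y t) (ε t) * bch (z t) (d t)) := by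
      refine Finset.prod_congr rfl fun t _ => ?_
      exact bch_choose_split (y t) (d t) (ε t)
    rw [Finset.prod_mul_distrib, Finset.prod_mul_distrib] at hkey
    calc (∏ t, bch (y t) (d t + ε t)) *
          ((∑ t, ((d t : ℕ) : F) / l t) * ∏ t, ((((d t : ℕ) + ε t).choose (d t : ℕ) : ℕ) : F))
        = (∑ t, ((d t : ℕ) : F) / l t) *
            ((∏ t, ((((d t) + ε t).choose (d t) : ℕ) : F)) * ∏ t, bch (y t) (d t + ε t)) := by
          ring
      _ = (∑ t, ((d t : ℕ) : F) / l t) *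
            ((∏ t, bch (y t) (ε t)) * ∏ t, bch (z t) (d t)) := by rw [hkey]
      _ = _ := by ring
  rw [Finset.sum_congr rfl hstep3, ← Finset.mul_sum]
  have hstep4 : ∑ d ∈ Finset.piAntidiag (Finset.univ : Finset (Fin k)) (m' + 1),
      (∑ t, ((d t : ℕ) : F) / l t) * ∏ t, bch (z t) (d t)
      = (∑ t, z t / l t) * bch ((∑ t, z t) - 1) m' := by
    have h1 : ∀ d ∈ Finset.piAntidiag (Finset.univ : Finset (Fin k)) (m' + 1),
        (∑ t, ((d t : ℕ) : F) / l t) * ∏ t, bch (z t) (d t)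
        = ∑ t, ((d t : F) * ∏ s, bch (z s) (d s)) / l t := by
      intro d _
      rw [Finset.sum_mul]
      exact Finset.sum_congr rfl fun t _ => by ring
    rw [Finset.sum_congr rfl h1, Finset.sum_comm]
    have h2 : ∀ t : Fin k, ∑ d ∈ Finset.piAntidiag (Finset.univ : Finset (Fin k)) (m' + 1),
        ((d t : F) * ∏ s, bch (z s) (d s)) / l t
        = (z t * bch ((∑ s, z s) - 1) m') / l t := by
      intro t
      rw [← Finset.sum_div, vand_single _ (Finset.mem_univ t) z m']
    rw [Finset.sum_congr rfl fun t _ => h2 t, Finset.sum_mul]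
    exact Finset.sum_congr rfl fun t _ => by ring
  rw [hstep4]
  have hstep5 : ∑ t, z t / l t = (n : F) + ∑ t, (x t - ((ε t : ℕ) : F)) / l t := by
    have h1 : ∀ t : Fin k, z t / l t = (x t - ((ε t : ℕ) : F)) / l t + ((α.1 t : ℕ) : F) := by
      intro t
      rw [hzdef, hy]
      field_simp [hl t]
      ring
    rw [Finset.sum_congr rfl fun t _ => h1 t, Finset.sum_add_distrib]
    have h2 : ∑ t, ((α.1 t : ℕ) : F) = (n : F) := by
      rw [← Nat.cast_sum, α.2]
    rw [h2]
    ring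
  have hstep6 : (∑ t, z t) = (∑ t, y t) - (((n - (m' + 1) : ℕ)) : F) := by
    rw [hzdef, Finset.sum_sub_distrib, ← Nat.cast_sum, hε]
  rw [hstep5, hstep6]
  have hm'1 : m' + 1 - 1 = m' := rfl
  rw [hm'1]
  ring
end
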